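/- arXiv:1804.09903 — 4 statements merged into one kernel-verified Lean document; each statement's English description precedes it below -/
import Mathlib

section
/- The set of columns of G''_k consists of exactly the 2^k distinct vectors in F_2^{k+1} of odd Hamming weight; i.e., the columns of G''_k are pairwise distinct and their set equals { v ∈ F_2^{k+1} : weight(v) is odd }. -/
/-- `T k x` is the length-`k` binary representation of `x` (most significant bit first). -/
def T (k x : ℕ) (t : Fin k) : ZMod 2 :=
  if Nat.testBit x (k - 1 - t.val) then 1 else 0

/-- Generator matrix `G'_k` of the `[2^k, k+1]` punctured Hadamard code. -/
def Gp (k : ℕ) : Matrix (Fin (k + 1)) (Fin (2 ^ k)) (ZMod 2) :=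
  fun i j => if h : i.val < k then T k j.val ⟨i.val, h⟩ else 1

/-- `V_{k+1}`: the `(k+1)×(k+1)` identity matrix with its last row replaced by all-ones. -/
def Vmat (k : ℕ) : Matrix (Fin (k + 1)) (Fin (k + 1)) (ZMod 2) :=
  fun i j => if i.val = k then 1 else if i = j then 1 else 0

/-- Systematic generator matrix `G''_k = V_{k+1} · G'_k`. -/
def Gpp (k : ℕ) : Matrix (Fin (k + 1)) (Fin (2 ^ k)) (ZMod 2) :=
  Vmat k * Gp k

lemma Gpp_apply_lt (k : ℕ) (i : Fin (k+1)) (j : Fin (2^k)) (h : i.val < k) :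
    Gpp k i j = T k j.val ⟨i.val, h⟩ := by
  rw [Gpp, Matrix.mul_apply]
  rw [Finset.sum_eq_single i]
  · simp [Vmat, Gp, Nat.ne_of_lt h, h]
  · intro b _ hb
    simp [Vmat, Nat.ne_of_lt h, hb.symm]
  · simp

lemma Gpp_apply_last (k : ℕ) (j : Fin (2^k)) :
    Gpp k (Fin.last k) j = (∑ t : Fin k, T k j.val t) + 1 := by
  rw [Gpp, Matrix.mul_apply]
  have : ∀ l, Vmat k (Fin.last k) l = 1 := by intro l; simp [Vmat, Fin.last]
  simp only [this, one_mul]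
  rw [Fin.sum_univ_castSucc]
  congr 1
  · apply Finset.sum_congr rfl
    intro t _
    simp [Gp, t.isLt, Fin.castSucc]
  · simp [Gp]

lemma sum_bits_lt (f : ℕ → Bool) (k : ℕ) :
    (∑ i ∈ Finset.range k, if f i then 2^i else 0) < 2^k := by
  induction k with
  | zero => simp
  | succ k ih =>
    rw [Finset.sum_range_succ]
    have : (if f k then 2^k else 0) ≤ 2^k := by split <;> simp
    calc _ < 2^k + 2^k := by omega
    _ = 2^(k+1) := by ring

lemma testBit_sum_bits (f : ℕ → Bool) (k m : ℕ) (hm : m < k) :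
    Nat.testBit (∑ i ∈ Finset.range k, if f i then 2^i else 0) m = f m := by
  induction k with
  | zero => omega
  | succ k ih =>
    rw [Finset.sum_range_succ]
    rcases Nat.lt_or_ge m k with h | h
    · cases hfk : f k
      · simpa using ih h
      · simp only [hfk, if_true]
        rw [Nat.add_comm, Nat.testBit_two_pow_add_gt h]
        exact ih h
    · have hmk : m = k := by omega
      subst hmk
      have hlt := sum_bits_lt f m
      cases hfk : f m
      · simpa using Nat.testBit_lt_two_pow hlt
      · rw [Nat.add_comm, if_pos rfl, Nat.testBit_two_pow_add_eq,
          Nat.testBit_lt_two_pow hlt]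
        rfl

lemma zmod2_ne_zero (x : ZMod 2) (h : x ≠ 0) : x = 1 := by revert h; revert x; decide

lemma odd_iff_sum_one (n : ℕ) (v : Fin n → ZMod 2) :
    Odd (Finset.univ.filter fun i => v i ≠ 0).card ↔ ∑ i, v i = 1 := by
  have h1 : ∑ i, v i = ((Finset.univ.filter fun i => v i ≠ 0).card : ZMod 2) := by
    rw [← Finset.sum_filter_ne_zero]
    rw [Finset.sum_congr rfl (fun i hi => zmod2_ne_zero _ (Finset.mem_filter.mp hi).2)]
    simp
  rw [h1, Nat.odd_iff]
  set c := (Finset.univ.filter fun i => v i ≠ 0).card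
  rw [← ZMod.natCast_mod c 2]
  rcases Nat.mod_two_eq_zero_or_one c with h | h <;> rw [h] <;> simp

/-- The columns of `G''_k` are pairwise distinct, and their set is exactly the set of
odd-Hamming-weight vectors of `F_2^{k+1}`. -/
theorem stmt_6 (k : ℕ) :
    Function.Injective (fun j : Fin (2 ^ k) => (fun i : Fin (k + 1) => Gpp k i j)) ∧
    Set.range (fun j : Fin (2 ^ k) => (fun i : Fin (k + 1) => Gpp k i j))
      = {v : Fin (k + 1) → ZMod 2 |
          Odd (Finset.univ.filter fun i : Fin (k + 1) => v i ≠ 0).card} := by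
  constructor
  · intro j1 j2 h
    simp only at h
    apply Fin.ext
    apply Nat.eq_of_testBit_eq
    intro m
    rcases Nat.lt_or_ge m k with hm | hm
    · have h1 := congrFun h (⟨k - 1 - m, by omega⟩ : Fin (k + 1))
      rw [Gpp_apply_lt k _ j1 (by simp; omega), Gpp_apply_lt k _ j2 (by simp; omega)] at h1
      simp only [T, show k - 1 - (k - 1 - m) = m from by omega] at h1
      cases hb1 : (j1 : ℕ).testBit m <;> cases hb2 : (j2 : ℕ).testBit m <;>
        rw [hb1, hb2] at h1 <;> simp at h1
    · rw [Nat.testBit_lt_two_pow, Nat.testBit_lt_two_pow]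
      · exact lt_of_lt_of_le j2.isLt (Nat.pow_le_pow_right (by norm_num) hm)
      · exact lt_of_lt_of_le j1.isLt (Nat.pow_le_pow_right (by norm_num) hm)
  · ext v
    simp only [Set.mem_range, Set.mem_setOf_eq, odd_iff_sum_one]
    have hzm : ∀ x : ZMod 2, x = 0 ∨ x = 1 := by decide
    constructor
    · rintro ⟨j, rfl⟩
      rw [Fin.sum_univ_castSucc, Gpp_apply_last]
      have hc : ∀ t : Fin k, Gpp k t.castSucc j = T k j.val t := by
        intro t
        rw [Gpp_apply_lt k _ j (by simp)]
        congr 1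
      rw [Finset.sum_congr rfl (fun t _ => hc t)]
      have : ∀ S : ZMod 2, S + (S + 1) = 1 := by decide
      exact this _
    · intro hv
      set f : ℕ → Bool :=
        fun i => decide (v ⟨k - 1 - i, by omega⟩ = 1) && decide (i < k) with hf
      refine ⟨⟨∑ i ∈ Finset.range k, if f i then 2^i else 0, sum_bits_lt f k⟩, ?_⟩
      have hcol : ∀ t : Fin k,
          T k (∑ i ∈ Finset.range k, if f i then 2^i else 0) t = v t.castSucc := by
        intro t
        have htk := t.isLt
        simp only [T]
        rw [testBit_sum_bits f k (k - 1 - t.val) (by omega)]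
        simp only [hf, show k - 1 - (k - 1 - t.val) = t.val from by omega,
          decide_eq_true_eq, Bool.and_eq_true, show k - 1 - t.val < k from by omega,
          decide_eq_true_eq]
        rcases hzm (v t.castSucc) with h0 | h1
        · have : v ⟨t.val, by omega⟩ = v t.castSucc := by congr 1
          rw [this, h0]
          simp
        · have : v ⟨t.val, by omega⟩ = v t.castSucc := by congr 1
          rw [this, h1]
          simp
      funext i
      rcases Nat.lt_or_ge i.val k with hi | hi
      · rw [Gpp_apply_lt k i _ hi]
        have : (⟨i.val, hi⟩ : Fin k).castSucc = i := by
          apply Fin.ext; simp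
        rw [show ((⟨∑ i ∈ Finset.range k, if f i then 2^i else 0,
            sum_bits_lt f k⟩ : Fin (2^k)) : ℕ) = _ from rfl]
        rw [hcol ⟨i.val, hi⟩, this]
      · have hil : i = Fin.last k := by
          apply Fin.ext
          have := i.isLt
          simp only [Fin.val_last]
          omega
        rw [hil, Gpp_apply_last]
        rw [Finset.sum_congr rfl (fun t _ => hcol t)]
        have hsplit : (∑ t : Fin k, v t.castSucc) + v (Fin.last k) = 1 := by
          rw [← Fin.sum_univ_castSucc]; exact hv
        have : ∀ a b : ZMod 2, a + b = 1 → a + 1 = b := by decide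
        exact this _ _ hsplit
end

section
/- The matrix G''_k equals the block matrix with first row (0_{2^{k-1}}, 1_{2^{k-1}}), middle rows (G_{k-1}, G_{k-1}), and last row (E_{k-1}, ¬E_{k-1}), where E_0 = [1] and E_k = [E_{k-1}, ¬E_{k-1}] with ¬ denoting bitwise complement. -/
/-- Generator matrix of the `[2^k, k]` Hadamard code. -/
def G (k : ℕ) : Matrix (Fin k) (Fin (2 ^ k)) (ZMod 2) :=
  fun i j => T k j.val i

/-- `E_k ∈ F_2^{2^k}`, defined by `E_0 = [1]` and `E_k = [E_{k-1}, ¬E_{k-1}]`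
(entry `j`, for `j < 2^k`; complement over `F_2` is adding `1`). -/
def E : ℕ → ℕ → ZMod 2
  | 0, _ => 1
  | k + 1, j => if j < 2 ^ k then E k j else E k (j - 2 ^ k) + 1

lemma E_eq (k j : ℕ) (hj : j < 2 ^ k) : E k j = 1 + ∑ i : Fin k, T k j i := by
  induction k generalizing j with
  | zero => simp [E]
  | succ k ih =>
    rw [Fin.sum_univ_succ]
    have hsucc : ∀ i : Fin k, T (k+1) j i.succ = T k (j % 2 ^ k) i := by
      intro i
      have hm : k - 1 - i.val < k := by have := i.isLt; omega
      have : Nat.testBit j (k + 1 - 1 - (i.succ : Fin (k+1)).val)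
           = Nat.testBit (j % 2 ^ k) (k - 1 - i.val) := by
        rw [Nat.testBit_mod_two_pow]
        simp only [Fin.val_succ]
        have : k + 1 - 1 - (i.val + 1) = k - 1 - i.val := by omega
        rw [this]
        simp [hm]
      simp only [T, this]
    by_cases h : j < 2 ^ k
    · have h0 : T (k+1) j 0 = 0 := by
        simp only [T, Fin.val_zero]
        simp only [Nat.sub_zero, Nat.add_sub_cancel, Nat.testBit_lt_two_pow h]
        simp
      have hmod : j % 2 ^ k = j := Nat.mod_eq_of_lt h
      simp only [E, if_pos h, h0, zero_add]
      rw [ih j h, Finset.sum_congr rfl (fun i _ => hsucc i), hmod]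
    · have h0 : T (k+1) j 0 = 1 := by
        simp only [T, Fin.val_zero]
        have : Nat.testBit j k = true := by
          have h1 : j / 2 ^ k = 1 := by
            have h2 : j / 2 ^ k < 2 := Nat.div_lt_of_lt_mul (by rw [pow_succ] at hj; exact hj)
            have h3 : 1 ≤ j / 2 ^ k := (Nat.one_le_div_iff (pow_pos two_pos k)).mpr (le_of_not_gt h)
            omega
          simp [Nat.testBit, Nat.shiftRight_eq_div_pow, h1]
        simp only [Nat.sub_zero, Nat.add_sub_cancel, this]
        simp
      have hmod : j % 2 ^ k = j - 2 ^ k := by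
        rw [Nat.mod_eq_sub_mod (le_of_not_gt h)]
        exact Nat.mod_eq_of_lt (by rw [pow_succ] at hj; omega)
      simp only [E, if_neg h, h0]
      rw [ih (j - 2 ^ k) (by omega), Finset.sum_congr rfl (fun i _ => hsucc i), hmod]
      ring

lemma Gpp_row_lt (k : ℕ) (i : Fin (k + 1)) (hi : i.val < k) (j : Fin (2 ^ k)) :
    Gpp k i j = T k j.val ⟨i.val, hi⟩ := by
  simp only [Gpp, Matrix.mul_apply, Vmat, Gp]
  rw [Finset.sum_eq_single i]
  · simp [Nat.ne_of_lt hi, hi]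
  · intro b _ hb
    simp [Nat.ne_of_lt hi, if_neg (Ne.symm hb)]
  · exact fun h => absurd (Finset.mem_univ i) h

lemma Gpp_last (k : ℕ) (j : Fin (2 ^ k)) :
    Gpp k ⟨k, lt_add_one k⟩ j = E k j.val := by
  simp only [Gpp, Matrix.mul_apply, Vmat]
  norm_num
  rw [E_eq k j.val j.isLt, Fin.sum_univ_castSucc]
  have hlast : Gp k (Fin.last k) j = 1 := by simp [Gp]
  have hc : ∀ l : Fin k, Gp k (Fin.castSucc l) j = T k j.val l := by
    intro l; simp [Gp, l.isLt]
  rw [hlast, Finset.sum_congr rfl (fun l _ => hc l), add_comm]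

/-- `G''_k` equals `G_k` with the row `E_k` appended, and (for `k ≥ 1`) satisfies the
block recursion: first row `(0_{2^{k-1}}, 1_{2^{k-1}})`, middle rows
`(G_{k-1}, G_{k-1})`, last row `(E_{k-1}, ¬E_{k-1})`. -/
theorem stmt_7 (k : ℕ) (hk : 1 ≤ k) :
    (∀ (i : Fin k) (j : Fin (2 ^ k)),
      Gpp k ⟨i.val, by have := i.isLt; omega⟩ j = G k i j) ∧
    (∀ j : Fin (2 ^ k), Gpp k ⟨k, by omega⟩ j = E k j.val) ∧
    (∀ j : Fin (2 ^ k),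
      Gpp k ⟨0, by omega⟩ j = if j.val < 2 ^ (k - 1) then 0 else 1) ∧
    (∀ (i : Fin (k - 1)) (j : Fin (2 ^ k)),
      Gpp k ⟨i.val + 1, by have := i.isLt; omega⟩ j
        = G (k - 1) i ⟨j.val % 2 ^ (k - 1), Nat.mod_lt _ (by positivity)⟩) ∧
    (∀ j : Fin (2 ^ k),
      Gpp k ⟨k, by omega⟩ j
        = if j.val < 2 ^ (k - 1) then E (k - 1) j.val
          else E (k - 1) (j.val - 2 ^ (k - 1)) + 1) := by
  refine ⟨fun i j => ?_, fun j => Gpp_last k j, fun j => ?_, fun i j => ?_, fun j => ?_⟩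
  · rw [Gpp_row_lt k _ i.isLt]; rfl
  · rw [Gpp_row_lt k _ (by omega : (0:ℕ) < k)]
    simp only [T]
    have hj := j.isLt
    by_cases h : j.val < 2 ^ (k - 1)
    · have : Nat.testBit j.val (k - 1) = false := by
        simpa using Nat.testBit_lt_two_pow h
      simp [this, h]
    · have h1 : j.val / 2 ^ (k - 1) = 1 := by
        have h2 : j.val / 2 ^ (k - 1) < 2 := Nat.div_lt_of_lt_mul
          (by rw [show 2 ^ (k-1) * 2 = 2 ^ k by rw [← pow_succ]; congr 1; omega]; exact hj)
        have h3 : 1 ≤ j.val / 2 ^ (k - 1) :=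
          (Nat.one_le_div_iff (pow_pos two_pos _)).mpr (le_of_not_gt h)
        omega
      have : Nat.testBit j.val (k - 1) = true := by
        simp [Nat.testBit, Nat.shiftRight_eq_div_pow, h1]
      simp [this, h]
  · rw [Gpp_row_lt k _ (by have := i.isLt; omega : i.val + 1 < k)]
    simp only [T, G]
    have hm : k - 1 - (i.val + 1) = k - 1 - 1 - i.val := by omega
    have hlt : k - 1 - 1 - i.val < k - 1 := by have := i.isLt; omega
    rw [Nat.testBit_mod_two_pow]
    simp [hm, hlt]
  · rw [Gpp_last k j]
    obtain ⟨m, rfl⟩ : ∃ m, k = m + 1 := ⟨k - 1, by omega⟩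
    simp [E]
end

section
/- (Transposition principle counting identity, special case) If computing the linear map x ↦ x·M for an i×j matrix M without zero rows or columns can be done with a straight-line program using a(M) additions over F_2, then there is a straight-line program computing v ↦ v·M^T using a(M) + j − i additions. -/
/-- The standard basis of `F_2^n`, i.e. the linear forms given by the `n` input bits. -/
def inputForms (n : ℕ) : List (Fin n → ZMod 2) :=
  (List.finRange n).map (fun i => fun t => if t = i then (1 : ZMod 2) else 0)

/-- The list of all values (linear forms over the `n` input bits) computed by a
straight-line XOR program: the inputs, followed by the outputs of the 2-input XOR
gates, each gate referring to two previously computed values by index. -/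
def values (n : ℕ) (gates : List (ℕ × ℕ)) : List (Fin n → ZMod 2) :=
  gates.foldl (fun acc g => acc ++ [acc.getD g.1 0 + acc.getD g.2 0]) (inputForms n)

/-- Validity of a straight-line program: each gate reads only previously computed
values (inputs or earlier gate outputs). -/
def ValidGates (n : ℕ) (gates : List (ℕ × ℕ)) : Prop :=
  ∀ i < gates.length, (gates.getD i (0, 0)).1 < n + i ∧ (gates.getD i (0, 0)).2 < n + i

/-- The outputs of the gates (the computed values other than the inputs). -/
def gateOutputs (n : ℕ) (gates : List (ℕ × ℕ)) : List (Fin n → ZMod 2) :=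
  (values n gates).drop n

/-- Hamming weight of a linear form (vector of coefficients over `F_2`). -/
def wt {n : ℕ} (v : Fin n → ZMod 2) : ℕ :=
  (Finset.univ.filter fun i => v i ≠ 0).card

/-!
Transposition principle. Induct on the gates from the front: a program on `n` inputs that
starts with the gate `x_n := x_a + x_b` is a program on `n + 1` inputs followed by the
substitution of `x_a + x_b` for `x_n`. On the transposed side that substitution is two row
operations on the target matrix, adding row `n` to rows `a` and `b`, each costing at most one
XOR. The invariant is `#gates + #(nonzero rows) ≤ g + j`: a row operation uses a gate only when
it does not make a zero row nonzero, and dropping row `n`, which is nonzero whenever it is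
added, pays for one of the two. Without gates every column is a unit vector, and the rows are
built one column at a time. If no row is zero, the invariant reads `#gates ≤ g + j - i`.
-/

open Finset

def appendXor {V : Type*} [Add V] [Zero V] (acc : List V) (g : ℕ × ℕ) : List V :=
  acc ++ [acc.getD g.1 0 + acc.getD g.2 0]

section Program

variable {n : ℕ}

lemma values_eq_foldl (n : ℕ) (gates : List (ℕ × ℕ)) :
    values n gates = gates.foldl appendXor (inputForms n) :=
  rfl

lemma inputForms_eq (n : ℕ) :
    inputForms n = (List.finRange n).map fun t => Pi.single t (1 : ZMod 2) := by
  simp only [inputForms]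
  congr 1
  funext t r
  rw [Pi.single_apply]

lemma length_foldl_appendXor {V : Type*} [Add V] [Zero V] (gs : List (ℕ × ℕ)) (acc : List V) :
    (gs.foldl appendXor acc).length = acc.length + gs.length := by
  induction gs generalizing acc with
  | nil => rfl
  | cons g gs ih => simp [ih, appendXor]; omega

lemma prefix_foldl_appendXor {V : Type*} [Add V] [Zero V] (gs : List (ℕ × ℕ)) (acc : List V) :
    acc <+: gs.foldl appendXor acc := by
  induction gs generalizing acc with
  | nil => exact List.prefix_refl acc
  | cons g gs ih => exact (List.prefix_append _ _).trans (ih _)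

lemma foldl_appendXor_map {V W : Type*} [AddZeroClass V] [AddZeroClass W] (φ : V →+ W)
    (gs : List (ℕ × ℕ)) (acc : List V) :
    gs.foldl appendXor (acc.map φ) = (gs.foldl appendXor acc).map φ := by
  induction gs generalizing acc with
  | nil => rfl
  | cons g gs ih =>
    have getD_map (k : ℕ) : (acc.map φ).getD k 0 = φ (acc.getD k 0) := by
      rw [← List.getD_map acc 0 φ, map_zero]
    rw [List.foldl_cons, List.foldl_cons, ← ih]
    simp only [appendXor, List.map_append, List.map_singleton, getD_map, map_add]

lemma length_values (n : ℕ) (gates : List (ℕ × ℕ)) :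
    (values n gates).length = n + gates.length := by
  simp [values_eq_foldl, length_foldl_appendXor, inputForms]

lemma values_append_singleton (gates : List (ℕ × ℕ)) (g : ℕ × ℕ) :
    values n (gates ++ [g]) = appendXor (values n gates) g := by
  rw [values, List.foldl_append]
  rfl

lemma values_prefix_values_append (gates extra : List (ℕ × ℕ)) :
    values n gates <+: values n (gates ++ extra) := by
  rw [values_eq_foldl, values_eq_foldl, List.foldl_append]
  exact prefix_foldl_appendXor _ _

lemma validGates_cons {g : ℕ × ℕ} {gates : List (ℕ × ℕ)} :
    ValidGates n (g :: gates) ↔ g.1 < n ∧ g.2 < n ∧ ValidGates (n + 1) gates := by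
  constructor
  · intro h
    refine ⟨(h 0 (by simp)).1, (h 0 (by simp)).2, fun t ht => ?_⟩
    have hgate := h (t + 1) (by simpa using ht)
    simp only [List.getD_cons_succ] at hgate
    omega
  · rintro ⟨h1, h2, h⟩ t ht
    cases t with
    | zero => simpa using ⟨h1, h2⟩
    | succ t =>
      have hgate := h t (by simpa using ht)
      simp only [List.getD_cons_succ]
      omega

lemma validGates_append_singleton {gates : List (ℕ × ℕ)} {g : ℕ × ℕ} (hv : ValidGates n gates)
    (h1 : g.1 < n + gates.length) (h2 : g.2 < n + gates.length) :
    ValidGates n (gates ++ [g]) := by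
  intro t ht
  rw [List.length_append, List.length_singleton] at ht
  rcases Nat.lt_or_ge t gates.length with h | h
  · rw [List.getD_append _ _ _ _ h]
    exact ⟨(hv t h).1.trans_le (by omega), (hv t h).2.trans_le (by omega)⟩
  · obtain rfl : t = gates.length := by omega
    simpa using ⟨h1, h2⟩

lemma exists_add_mem_values_append_singleton {gates : List (ℕ × ℕ)}
    (hv : ValidGates n gates) {u w : Fin n → ZMod 2} (hu : u ∈ values n gates)
    (hw : w ∈ values n gates) :
    ∃ g, ValidGates n (gates ++ [g]) ∧ u + w ∈ values n (gates ++ [g]) := by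
  have hu' := List.idxOf_lt_length_iff.mpr hu
  have hw' := List.idxOf_lt_length_iff.mpr hw
  refine ⟨((values n gates).idxOf u, (values n gates).idxOf w), ?_, ?_⟩
  · rw [length_values] at hu' hw'
    exact validGates_append_singleton hv hu' hw'
  · rw [values_append_singleton, appendXor, List.getD_eq_getElem _ _ hu',
      List.getD_eq_getElem _ _ hw', List.getElem_idxOf, List.getElem_idxOf]
    simp

end Program

/-- The zero form counts as computed for free: it is only needed for zero rows, which the
cost invariant does not count. -/
def Yields (n : ℕ) (gates : List (ℕ × ℕ)) (v : Fin n → ZMod 2) : Prop :=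
  v = 0 ∨ v ∈ values n gates

lemma Yields.append {n : ℕ} {gates : List (ℕ × ℕ)} {v : Fin n → ZMod 2}
    (h : Yields n gates v) (extra : List (ℕ × ℕ)) : Yields n (gates ++ extra) v :=
  h.imp_right fun hv => (values_prefix_values_append gates extra).subset hv

def nonzeroRows {ι V : Type*} [Fintype ι] [Zero V] [DecidableEq V] (A : ι → V) : Finset ι :=
  {r | A r ≠ 0}

section NonzeroRows

variable {ι V : Type*} [Fintype ι] [Zero V] [DecidableEq V]

lemma nonzeroRows_subset_insert [DecidableEq ι] {A A' : ι → V} {s : ι}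
    (hA' : ∀ r ≠ s, A' r = A r) : nonzeroRows A' ⊆ insert s (nonzeroRows A) := by
  intro r hr
  by_cases hrs : r = s
  · exact hrs ▸ mem_insert_self r _
  · simp_all [nonzeroRows]

lemma card_nonzeroRows_castSucc {n : ℕ} (A : Fin (n + 1) → V) :
    #(nonzeroRows A) =
      #(nonzeroRows fun r : Fin n => A r.castSucc) + if A (Fin.last n) = 0 then 0 else 1 := by
  rw [nonzeroRows, nonzeroRows, card_filter, card_filter, Fin.sum_univ_castSucc, ite_not]

end NonzeroRows

lemma exists_yields_updateRow_add {j : ℕ} {ι : Type*} [Fintype ι] [DecidableEq ι]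
    {Q : List (ℕ × ℕ)} (hQ : ValidGates j Q) {A : Matrix ι (Fin j) (ZMod 2)}
    (hA : ∀ r, Yields j Q (A r)) (s : ι) {v : Fin j → ZMod 2} (hv : Yields j Q v) :
    ∃ E, ValidGates j (Q ++ E) ∧ (∀ r, Yields j (Q ++ E) (A.updateRow s (A s + v) r)) ∧
      E.length + #(nonzeroRows (A.updateRow s (A s + v))) ≤
        #(nonzeroRows A) + if v = 0 then 0 else 1 := by
  have hsub := nonzeroRows_subset_insert (A := A) (A' := A.updateRow s (A s + v)) (s := s)
    fun r hr => Matrix.updateRow_ne hr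
  by_cases hv0 : v = 0
  · refine ⟨[], by simpa using hQ, ?_, ?_⟩ <;> simp [hv0, hA]
  by_cases hs0 : A s = 0
  · refine ⟨[], by simpa using hQ, fun r => ?_, ?_⟩
    · rw [List.append_nil]
      by_cases hrs : r = s
      · simpa [hrs, hs0] using hv
      · simpa [Matrix.updateRow_ne hrs] using hA r
    · simpa [hv0] using (card_le_card hsub).trans (card_insert_le _ _)
  obtain ⟨g, hg, hmem⟩ := exists_add_mem_values_append_singleton hQ
    ((hA s).resolve_left hs0) (hv.resolve_left hv0)
  refine ⟨[g], hg, fun r => ?_, ?_⟩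
  · by_cases hrs : r = s
    · exact Or.inr (by simpa [hrs] using hmem)
    · simpa [Matrix.updateRow_ne hrs] using (hA r).append [g]
  · have hs : s ∈ nonzeroRows A := by simpa [nonzeroRows] using hs0
    have hcard := card_le_card hsub
    rw [card_insert_of_mem hs] at hcard
    simp only [hv0, if_false, List.length_singleton]
    omega

lemma single_one_mem_values {n : ℕ} (gates : List (ℕ × ℕ)) (c : Fin n) :
    Pi.single c 1 ∈ values n gates := by
  refine (prefix_foldl_appendXor gates _).subset ?_
  rw [inputForms_eq]
  exact List.mem_map_of_mem (List.mem_finRange c)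

lemma exists_yields_rows_of_mem_inputForms {n j : ℕ} (M : Matrix (Fin n) (Fin j) (ZMod 2))
    (hM : ∀ c, (fun r => M r c) ∈ inputForms n) :
    ∃ Q, ValidGates j Q ∧ Q.length + #(nonzeroRows M) ≤ j ∧ ∀ r, Yields j Q (M r) := by
  simp only [inputForms_eq, List.mem_map, List.mem_finRange, true_and] at hM
  choose out hout using hM
  have hMout (r : Fin n) (c : Fin j) : M r c = (Pi.single (out c) 1 : Fin n → ZMod 2) r :=
    (congrFun (hout c) r).symm
  let A (S : Finset (Fin j)) : Matrix (Fin n) (Fin j) (ZMod 2) :=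
    Matrix.of fun r c => if c ∈ S then M r c else 0
  suffices ∀ S, ∃ Q, ValidGates j Q ∧ Q.length + #(nonzeroRows (A S)) ≤ #S ∧
      ∀ r, Yields j Q (A S r) by
    have hA : A univ = M := by ext; simp [A]
    simpa [hA] using this univ
  intro S
  induction S using Finset.induction_on with
  | empty =>
    have hA (r : Fin n) : A ∅ r = 0 := by ext; simp [A]
    exact ⟨[], fun t ht => by simp at ht, by simp [hA, nonzeroRows], fun r => Or.inl (hA r)⟩
  | insert c S hc ih =>
    obtain ⟨Q, hQ, hcard, hA⟩ := ih
    have hupd : A (insert c S) = (A S).updateRow (out c) (A S (out c) + Pi.single c 1) := by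
      ext r c'
      by_cases hc' : c' = c
      · subst hc'
        by_cases hr : r = out c' <;> simp [A, Matrix.updateRow_apply, hMout, hr, hc]
      · by_cases hr : r = out c <;> simp [A, Matrix.updateRow_apply, hMout, hr, hc']
    obtain ⟨E, hE, hyE, hcardE⟩ :=
      exists_yields_updateRow_add hQ hA (out c) (Or.inr (single_one_mem_values Q c))
    refine ⟨Q ++ E, hE, ?_, hupd ▸ hyE⟩
    rw [hupd, card_insert_of_notMem hc, List.length_append]
    split_ifs at hcardE <;> omega

/-- `substLast u w` is the linear form `w` in `n + 1` variables after the last variable is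
replaced by the linear form `u` in the first `n`. -/
def substLast {R : Type*} [Semiring R] {n : ℕ} (u : Fin n → R) :
    (Fin (n + 1) → R) →+ (Fin n → R) where
  toFun w := Fin.init w + w (Fin.last n) • u
  map_zero' := by ext; simp [Fin.init]
  map_add' w w' := by ext; simp [Fin.init, add_mul]; abel

lemma values_cons {n : ℕ} (a b : Fin n) (gates : List (ℕ × ℕ)) :
    values n ((a, b) :: gates) =
      (values (n + 1) gates).map (substLast (Pi.single a 1 + Pi.single b 1)) := by
  rw [values_eq_foldl, values_eq_foldl, List.foldl_cons, ← foldl_appendXor_map]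
  congr 1
  have hget (t : Fin n) : (inputForms n).getD t 0 = Pi.single t 1 := by
    rw [inputForms_eq, List.getD_eq_getElem _ _ (by simp)]
    simp
  have hsubst (t : Fin n) :
      substLast (Pi.single a 1 + Pi.single b 1) (Pi.single t.castSucc (1 : ZMod 2)) =
        Pi.single t 1 := by
    ext r
    simp [substLast, Fin.init, Pi.single_apply]
  have hlast :
      substLast (Pi.single a 1 + Pi.single b 1) (Pi.single (Fin.last n) (1 : ZMod 2)) =
        Pi.single a 1 + Pi.single b 1 := by
    ext r
    simp [substLast, Fin.init, Pi.single_apply, Fin.castSucc_ne_last]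
  rw [appendXor, hget, hget, inputForms_eq, inputForms_eq, List.finRange_succ_last]
  simp only [List.map_append, List.map_map, List.map_singleton, hlast]
  congr 2
  funext t
  exact (hsubst t).symm

/-- For `a = b` the last row is added to row `a` twice, i.e. not at all, matching
`x_a + x_a = 0`. -/
lemma substLast_single_add_single_apply {n j : ℕ} (M' : Matrix (Fin (n + 1)) (Fin j) (ZMod 2))
    (a b r : Fin n) (c : Fin j) :
    substLast (Pi.single a 1 + Pi.single b 1) (fun r => M' r c) r =
      let M₁ := M'.updateRow a.castSucc (M' a.castSucc + M' (Fin.last n))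
      M₁.updateRow b.castSucc (M₁ b.castSucc + M₁ (Fin.last n)) r.castSucc c := by
  have hne (t : Fin n) : Fin.last n ≠ t.castSucc := (Fin.castSucc_ne_last t).symm
  simp only [substLast, Fin.init, AddMonoidHom.coe_mk, ZeroHom.coe_mk, Matrix.updateRow_apply,
    Fin.castSucc_inj, hne, if_false, Pi.single_apply, Pi.add_apply, Pi.smul_apply, smul_eq_mul]
  split_ifs <;> simp_all [add_assoc, CharTwo.add_self_eq_zero]

lemma exists_yields_rows_substLast {n j : ℕ} {Q : List (ℕ × ℕ)} (hQ : ValidGates j Q)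
    {M' : Matrix (Fin (n + 1)) (Fin j) (ZMod 2)} (hM' : ∀ r, Yields j Q (M' r)) (a b : Fin n)
    {M : Matrix (Fin n) (Fin j) (ZMod 2)}
    (hM : ∀ c, (fun r => M r c) = substLast (Pi.single a 1 + Pi.single b 1) (fun r => M' r c)) :
    ∃ Q', ValidGates j Q' ∧ Q'.length + #(nonzeroRows M) ≤ Q.length + #(nonzeroRows M') + 1 ∧
      ∀ r, Yields j Q' (M r) := by
  obtain ⟨E₁, hE₁, hy₁, hc₁⟩ :=
    exists_yields_updateRow_add hQ hM' a.castSucc (hM' (Fin.last n))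
  set M₁ := M'.updateRow a.castSucc (M' a.castSucc + M' (Fin.last n))
  obtain ⟨E₂, hE₂, hy₂, hc₂⟩ :=
    exists_yields_updateRow_add hE₁ hy₁ b.castSucc (hy₁ (Fin.last n))
  set M₂ := M₁.updateRow b.castSucc (M₁ b.castSucc + M₁ (Fin.last n))
  have hM₁ : M₁ (Fin.last n) = M' (Fin.last n) :=
    Matrix.updateRow_ne (Fin.castSucc_ne_last a).symm
  have hM₂ : M₂ (Fin.last n) = M' (Fin.last n) :=
    (Matrix.updateRow_ne (Fin.castSucc_ne_last b).symm).trans hM₁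
  have hinit : (fun r => M₂ r.castSucc) = M := by
    ext r c
    rw [show M r c = _ from congrFun (hM c) r, substLast_single_add_single_apply]
  have hcount := card_nonzeroRows_castSucc M₂
  rw [hM₁] at hc₂
  rw [hM₂, hinit] at hcount
  refine ⟨Q ++ E₁ ++ E₂, hE₂, ?_, fun r => hinit ▸ hy₂ r.castSucc⟩
  simp only [List.length_append]
  split_ifs at hc₁ hc₂ hcount <;> omega

theorem exists_transpose_program {n j : ℕ} (gates : List (ℕ × ℕ)) (hv : ValidGates n gates)
    (M : Matrix (Fin n) (Fin j) (ZMod 2)) (hM : ∀ c, (fun r => M r c) ∈ values n gates) :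
    ∃ Q, ValidGates j Q ∧ Q.length + #(nonzeroRows M) ≤ gates.length + j ∧
      ∀ r, Yields j Q (M r) := by
  induction gates generalizing n with
  | nil => simpa using exists_yields_rows_of_mem_inputForms M hM
  | cons g gates ih =>
    obtain ⟨ha, hb, hv'⟩ := validGates_cons.mp hv
    obtain ⟨a, b⟩ := g
    lift a to Fin n using ha
    lift b to Fin n using hb
    simp only [values_cons, List.mem_map] at hM
    choose w hw hMw using hM
    obtain ⟨Q, hQ, hcard, hy⟩ := ih hv' (Matrix.of fun r c => w c r) hw
    obtain ⟨Q', hQ', hcard', hy'⟩ :=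
      exists_yields_rows_substLast hQ hy a b (M := M) fun c => (hMw c).symm
    refine ⟨Q', hQ', ?_, hy'⟩
    rw [List.length_cons]
    omega

theorem stmt_14_general (i j : ℕ) (M : Matrix (Fin i) (Fin j) (ZMod 2))
    (hrow : ∀ r : Fin i, ∃ c : Fin j, M r c ≠ 0)
    (gates : List (ℕ × ℕ)) (hv : ValidGates i gates)
    (hcomp : ∀ c : Fin j, (fun r : Fin i => M r c) ∈ values i gates) :
    ∃ gates' : List (ℕ × ℕ), ValidGates j gates' ∧
      gates'.length ≤ gates.length + j - i ∧
      ∀ r : Fin i, (fun c : Fin j => M r c) ∈ values j gates' := by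
  obtain ⟨Q, hQ, hcard, hy⟩ := exists_transpose_program gates hv M hcomp
  have hrow_ne (r : Fin i) : M r ≠ 0 := fun h => (hrow r).elim fun c hc => hc (congrFun h c)
  have hall : nonzeroRows M = univ :=
    eq_univ_of_forall fun r => by simpa [nonzeroRows] using hrow_ne r
  rw [hall, card_univ, Fintype.card_fin] at hcard
  exact ⟨Q, hQ, by omega, fun r => (hy r).resolve_left (hrow_ne r)⟩

/-- Transposition principle (counting identity, over `F_2`): if a straight-line XOR
program with `g` gates computes `x ↦ x·M` for an `i×j` matrix `M` with no zero row and
no zero column (every column of `M`, as a linear form in the `i` inputs, appears among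
the computed values), then some straight-line XOR program with at most `g + j − i`
gates computes `v ↦ v·Mᵀ`. -/
theorem stmt_14 (i j : ℕ) (M : Matrix (Fin i) (Fin j) (ZMod 2))
    (hrow : ∀ r : Fin i, ∃ c : Fin j, M r c ≠ 0)
    (hcol : ∀ c : Fin j, ∃ r : Fin i, M r c ≠ 0)
    (gates : List (ℕ × ℕ)) (hv : ValidGates i gates)
    (hcomp : ∀ c : Fin j, (fun r : Fin i => M r c) ∈ values i gates) :
    ∃ gates' : List (ℕ × ℕ), ValidGates j gates' ∧
      gates'.length ≤ gates.length + j - i ∧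
      ∀ r : Fin i, (fun c : Fin j => M r c) ∈ values j gates' :=
  stmt_14_general i j M hrow gates hv hcomp
end

section
/- Identifying two message variables in the systematic punctured Hadamard code reduces it to the next smaller one: if x' is obtained from x ∈ F_2^k by duplicating coordinate x_u at position v (0 ≤ u < v < k), then the vector x'·G''_k is a permutation (with multiplicity) of the concatenation x·G''_{k-1} | x·G''_{k-1}; equivalently, for every column g of G''_{k-1} there are exactly two columns of G''_k that, after adding row u to the duplicated row and deleting the duplicated row, equal g. -/
/-- The lift `ḡ_b ∈ F_2^{k+1}` of `g ∈ F_2^k`: insert the bit `b` at position `v`,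
and when `b = 1` additionally flip coordinate `u`. -/
def lift (k u v : ℕ) (g : Fin k → ZMod 2) (b : ZMod 2) : Fin (k + 1) → ZMod 2 :=
  fun i =>
    if i.val < v then
      (if h : i.val < k then g ⟨i.val, h⟩ + (if i.val = u then b else 0) else 0)
    else if i.val = v then b
    else (if h : i.val - 1 < k then g ⟨i.val - 1, h⟩ else 0)

/-- `x' ∈ F_2^{k+1}`: the vector `x ∈ F_2^k` with coordinate `x_u` duplicated at
position `v`. -/
def dup (k u v : ℕ) (hu : u < k) (x : Fin k → ZMod 2) : Fin (k + 1) → ZMod 2 :=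
  fun i =>
    if h : i.val < v then (if h' : i.val < k then x ⟨i.val, h'⟩ else 0)
    else if i.val = v then x ⟨u, hu⟩
    else (if h' : i.val - 1 < k then x ⟨i.val - 1, h'⟩ else 0)

section Aux

lemma cast_wt {n : ℕ} (w : Fin n → ZMod 2) : ((wt w : ℕ) : ZMod 2) = ∑ i, w i := by
  have h : ∀ a : ZMod 2, (if a ≠ 0 then (1 : ZMod 2) else 0) = a := by decide
  rw [wt, Finset.card_eq_sum_ones, Nat.cast_sum]
  simp only [Nat.cast_one]
  rw [Finset.sum_filter]
  exact Finset.sum_congr rfl fun i _ => h (w i)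

lemma odd_iff_cast (n : ℕ) : Odd n ↔ (n : ZMod 2) = 1 := by
  rw [Nat.odd_iff, ← ZMod.natCast_mod n 2]
  rcases Nat.mod_two_eq_zero_or_one n with h | h <;> rw [h] <;> simp

lemma odd_wt_iff {n : ℕ} (w : Fin n → ZMod 2) : Odd (wt w) ↔ (∑ i, w i) = 1 := by
  rw [odd_iff_cast, cast_wt]

variable (k u v : ℕ)

lemma lift_at_v (hv : v < k + 1) (g : Fin k → ZMod 2) (b : ZMod 2) :
    lift k u v g b ⟨v, hv⟩ = b := by
  simp [lift]

lemma dup_at_v (hu : u < k) (hv : v < k + 1) (huv : u < v) (x : Fin k → ZMod 2) :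
    dup k u v hu x ⟨v, hv⟩ = x ⟨u, hu⟩ := by
  simp [dup]

lemma lift_succAbove (huv : u < v) (hvk : v < k) (g : Fin k → ZMod 2) (b : ZMod 2)
    (i : Fin k) :
    lift k u v g b ((⟨v, Nat.lt_succ_of_lt hvk⟩ : Fin (k + 1)).succAbove i)
      = g i + (if (i : ℕ) = u then b else 0) := by
  rcases lt_or_ge (i : ℕ) v with h | h
  · rw [Fin.succAbove_of_castSucc_lt _ _ (by simp [Fin.lt_def, h])]
    simp [lift, h, i.isLt]
  · rw [Fin.succAbove_of_le_castSucc _ _ (by simp [Fin.le_def, h])]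
    have h1 : ¬ ((i : ℕ) + 1 < v) := by omega
    have h2 : (i : ℕ) + 1 ≠ v := by omega
    have h3 : (i : ℕ) ≠ u := by omega
    simp [lift, Fin.val_succ, h1, h2, h3, i.isLt]

lemma dup_succAbove (hu : u < k) (hvk : v < k) (x : Fin k → ZMod 2) (i : Fin k) :
    dup k u v hu x ((⟨v, Nat.lt_succ_of_lt hvk⟩ : Fin (k + 1)).succAbove i) = x i := by
  rcases lt_or_ge (i : ℕ) v with h | h
  · rw [Fin.succAbove_of_castSucc_lt _ _ (by simp [Fin.lt_def, h])]
    simp [dup, h, i.isLt]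
  · rw [Fin.succAbove_of_le_castSucc _ _ (by simp [Fin.le_def, h])]
    have h1 : ¬ ((i : ℕ) + 1 < v) := by omega
    have h2 : (i : ℕ) + 1 ≠ v := by omega
    simp [dup, Fin.val_succ, h1, h2, i.isLt]

lemma sum_delta (huv : u < v) (hvk : v < k) (b : ZMod 2) :
    (∑ i : Fin k, if (i : ℕ) = u then b else 0) = b := by
  have hu : u < k := huv.trans hvk
  have : ∀ i : Fin k, ((i : ℕ) = u) ↔ (i = ⟨u, hu⟩) := fun i => by
    simp [Fin.ext_iff]
  simp_rw [this]
  simp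

lemma sum_lift (huv : u < v) (hvk : v < k) (g : Fin k → ZMod 2) (b : ZMod 2) :
    (∑ i : Fin (k + 1), lift k u v g b i) = ∑ i : Fin k, g i := by
  rw [Fin.sum_univ_succAbove _ (⟨v, Nat.lt_succ_of_lt hvk⟩ : Fin (k + 1))]
  simp_rw [lift_succAbove k u v huv hvk, lift_at_v]
  rw [Finset.sum_add_distrib, sum_delta k u v huv hvk]
  ring_nf
  simp [show (2 : ZMod 2) = 0 from rfl]

/-- the inverse map -/
def inv' (hvk : v < k) (w : Fin (k + 1) → ZMod 2) : (Fin k → ZMod 2) × ZMod 2 :=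
  (fun i => w ((⟨v, Nat.lt_succ_of_lt hvk⟩ : Fin (k + 1)).succAbove i)
      + (if (i : ℕ) = u then w ⟨v, Nat.lt_succ_of_lt hvk⟩ else 0),
   w ⟨v, Nat.lt_succ_of_lt hvk⟩)

lemma left_inv (huv : u < v) (hvk : v < k) (g : Fin k → ZMod 2) (b : ZMod 2) :
    inv' k u v hvk (lift k u v g b) = (g, b) := by
  unfold inv'
  ext i
  · simp only
    rw [lift_succAbove k u v huv hvk, lift_at_v]
    rcases eq_or_ne ((i : ℕ)) u with h | h <;>
      simp [h, CharTwo.add_self_eq_zero, add_assoc]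
  · simp [lift_at_v]

lemma right_inv (huv : u < v) (hvk : v < k) (w : Fin (k + 1) → ZMod 2) :
    lift k u v (inv' k u v hvk w).1 (inv' k u v hvk w).2 = w := by
  funext j
  by_cases hj : j = (⟨v, Nat.lt_succ_of_lt hvk⟩ : Fin (k + 1))
  · subst hj; rw [lift_at_v]; rfl
  · obtain ⟨i, hi⟩ := Fin.exists_succAbove_eq hj
    rw [← hi, lift_succAbove k u v huv hvk]
    unfold inv'
    simp only
    rcases eq_or_ne ((i : ℕ)) u with h | h <;>
      simp [h, CharTwo.add_self_eq_zero, add_assoc]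

end Aux

/-- Identifying two message variables reduces the systematic punctured Hadamard code to
the next smaller one: for `0 ≤ u < v < k`, the map `(g, b) ↦ ḡ_b` is a bijection from
(odd-weight vectors of `F_2^k`) × `F_2` onto the odd-weight vectors of `F_2^{k+1}`,
and for every `x ∈ F_2^k`, `x'·ḡ_b = x·g` where `x'` duplicates `x_u` at position `v`. -/
theorem stmt_18 (k u v : ℕ) (huv : u < v) (hvk : v < k) :
    Set.BijOn (fun p : (Fin k → ZMod 2) × ZMod 2 => lift k u v p.1 p.2)
      {p | Odd (wt p.1)} {w : Fin (k + 1) → ZMod 2 | Odd (wt w)} ∧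
    ∀ (x g : Fin k → ZMod 2) (b : ZMod 2),
      (∑ i : Fin (k + 1), dup k u v (huv.trans hvk) x i * lift k u v g b i)
        = ∑ i : Fin k, x i * g i := by
  constructor
  · apply Set.InvOn.bijOn (f' := inv' k u v hvk)
    · constructor
      · intro p hp
        exact left_inv k u v huv hvk p.1 p.2
      · intro w hw
        exact right_inv k u v huv hvk w
    · intro p hp
      simp only [Set.mem_setOf_eq] at hp ⊢
      rw [odd_wt_iff] at hp ⊢
      rw [sum_lift k u v huv hvk]
      exact hp
    · intro w hw
      simp only [Set.mem_setOf_eq] at hw ⊢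
      rw [odd_wt_iff] at hw ⊢
      have := sum_lift k u v huv hvk (inv' k u v hvk w).1 (inv' k u v hvk w).2
      rw [right_inv k u v huv hvk w] at this
      rw [← this]
      exact hw
  · intro x g b
    rw [Fin.sum_univ_succAbove _ (⟨v, Nat.lt_succ_of_lt hvk⟩ : Fin (k + 1))]
    simp_rw [lift_succAbove k u v huv hvk, dup_succAbove k u v (huv.trans hvk) hvk,
      lift_at_v, dup_at_v k u v (huv.trans hvk) _ huv]
    simp_rw [mul_add]
    rw [Finset.sum_add_distrib]
    have hd : (∑ i : Fin k, x i * (if (i : ℕ) = u then b else 0))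
        = x ⟨u, huv.trans hvk⟩ * b := by
      have hu : u < k := huv.trans hvk
      have : ∀ i : Fin k, ((i : ℕ) = u) ↔ (i = ⟨u, hu⟩) := fun i => by
        simp [Fin.ext_iff]
      simp_rw [mul_ite, mul_zero, this]
      simp
    rw [hd]
    ring_nf
    simp [show (2 : ZMod 2) = 0 from rfl]
end
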